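/- A vector Ψ in H = ℓ²(ℤ;ℂ²) satisfies (U − e^{iλ})Ψ = 0 if and only if Ψ satisfies the transfer-matrix recurrence (JΨ)(x+1) = T_x(λ)·(JΨ)(x) for all x ∈ ℤ. -/

import Mathlib

/-!
Reindexing the two components of `UΨ = e^{iλ}Ψ` turns the eigenequation into the local equations
`C_x Ψ(x) = e^{iλ} (Ψ_L(x-1), Ψ_R(x+1))` at each site. After writing `e^{iλ} = e^{iΔ_x} e^{i(λ-Δ_x)}`
and cancelling the phase `e^{iΔ_x}`, this is a 2×2 linear system between `(JΨ)(x) = (Ψ_L(x-1), Ψ_R(x))`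
and `(JΨ)(x+1) = (Ψ_L(x), Ψ_R(x+1))`. Since `α_x ≠ 0` it can be solved for `(JΨ)(x+1)`, and
`|α_x|² + |β_x|² = 1` makes the solution exactly `T_x(λ) (JΨ)(x)`.
-/

open scoped Real

/-- The coin matrix `C = e^{iΔ}[[α, β], [−conj β, conj α]]`. -/
noncomputable def coinM (a b : ℂ) (d : ℝ) : Matrix (Fin 2) (Fin 2) ℂ :=
  Complex.exp (Complex.I * d) • !![a, b; -(starRingEnd ℂ b), starRingEnd ℂ a]

/-- The transfer matrix `T(λ) = (1/α)[[e^{i(λ−Δ)}, −β], [−conj β, e^{−i(λ−Δ)}]]`. -/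
noncomputable def transferM (a b : ℂ) (d l : ℝ) : Matrix (Fin 2) (Fin 2) ℂ :=
  a⁻¹ • !![Complex.exp (Complex.I * (l - d)), -b;
           -(starRingEnd ℂ b), Complex.exp (-(Complex.I * (l - d)))]

/-- Square-summability of `Ψ : ℤ → ℂ²`, i.e. `Σ_{x∈ℤ} ‖Ψ(x)‖²_{ℂ²} < ∞`. -/
def SqSummable (Ψ : ℤ → Fin 2 → ℂ) : Prop :=
  Summable fun x : ℤ => ‖Ψ x 0‖ ^ 2 + ‖Ψ x 1‖ ^ 2

/-- The time evolution `U = SC`:  `(UΨ)(x) = ((C_{x+1}Ψ(x+1))_L, (C_{x−1}Ψ(x−1))_R)ᵀ`. -/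
noncomputable def Uact (C : ℤ → Matrix (Fin 2) (Fin 2) ℂ) (Ψ : ℤ → Fin 2 → ℂ) :
    ℤ → Fin 2 → ℂ :=
  fun x => ![(C (x + 1)).mulVec (Ψ (x + 1)) 0, (C (x - 1)).mulVec (Ψ (x - 1)) 1]

/-- The unitary `J`:  `(JΨ)(x) = (Ψ_L(x−1), Ψ_R(x))ᵀ`. -/
def Jact (Ψ : ℤ → Fin 2 → ℂ) : ℤ → Fin 2 → ℂ := fun x => ![Ψ (x - 1) 0, Ψ x 1]

open Complex Matrix ComplexConjugate

theorem mulVec_vec2 {R : Type*} [NonUnitalNonAssocSemiring R] (a b c d x y : R) :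
    !![a, b; c, d] *ᵥ ![x, y] = ![a * x + b * y, c * x + d * y] :=
  (mulVecᵣ_eq _ _).symm

theorem vec2_eta {α : Type*} (v : Fin 2 → α) : v = ![v 0, v 1] := by
  ext i; fin_cases i <;> rfl

theorem su2_mulVec_eq_smul_iff {a b E p q r s : ℂ} (ha : a ≠ 0) (hE : E ≠ 0)
    (hab : ‖a‖ ^ 2 + ‖b‖ ^ 2 = 1) :
    !![a, b; -conj b, conj a] *ᵥ ![q, r] = E • ![p, s] ↔
      ![q, s] = a⁻¹ • !![E, -b; -conj b, E⁻¹] *ᵥ ![p, r] := by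
  have hab' : conj a * a + conj b * b = 1 := by
    rw [conj_mul', conj_mul']; exact_mod_cast hab
  simp only [mulVec_vec2, smul_cons, smul_eq_mul, smul_empty, vecCons_inj, and_true]
  have hq : a * q + b * r = E * p ↔ q = a⁻¹ * (E * p + -b * r) := by
    rw [eq_inv_mul_iff_mul_eq₀ ha]; constructor <;> intro h <;> linear_combination h
  rw [← hq, eq_inv_mul_iff_mul_eq₀ ha]
  refine and_congr_right fun h₁ => ⟨fun h₂ => ?_, fun h₂ => ?_⟩
  · field_simp
    linear_combination (-a) * h₂ + (-conj b) * h₁ + r * hab'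
  · field_simp at h₂
    refine mul_left_cancel₀ ha ?_
    linear_combination (-conj b) * h₁ + r * hab' - h₂

theorem coinM_mulVec_eq_smul_iff {a b : ℂ} (ha : a ≠ 0) (hab : ‖a‖ ^ 2 + ‖b‖ ^ 2 = 1)
    (d l : ℝ) (v w : Fin 2 → ℂ) :
    coinM a b d *ᵥ v = exp (I * l) • w ↔
      ![v 0, w 1] = transferM a b d l *ᵥ ![w 0, v 1] := by
  have hphase : exp (I * l) = exp (I * d) * exp (I * (l - d)) := by
    rw [← Complex.exp_add]; ring_nf
  rw [coinM, smul_mulVec, hphase, mul_smul, smul_right_inj (exp_ne_zero _), transferM,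
    Complex.exp_neg, smul_mulVec]
  conv_lhs => rw [vec2_eta v, vec2_eta w]
  exact su2_mulVec_eq_smul_iff ha (exp_ne_zero _) hab

theorem Uact_eq_smul_iff (C : ℤ → Matrix (Fin 2) (Fin 2) ℂ) (c : ℂ) (Ψ : ℤ → Fin 2 → ℂ) :
    Uact C Ψ = c • Ψ ↔ ∀ x, C x *ᵥ Ψ x = c • ![Ψ (x - 1) 0, Ψ (x + 1) 1] := by
  constructor
  · intro h x
    ext i
    fin_cases i
    · simpa [Uact] using congrFun (congrFun h (x - 1)) 0
    · simpa [Uact] using congrFun (congrFun h (x + 1)) 1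
  · intro h
    funext y i
    fin_cases i
    · simpa [Uact] using congrFun (h (y + 1)) 0
    · simpa [Uact] using congrFun (h (y - 1)) 1

theorem eigenequation_iff_transfer_recurrence
    (α β : ℤ → ℂ) (Δ : ℤ → ℝ)
    (hα : ∀ x, α x ≠ 0)
    (hαβ : ∀ x, ‖α x‖ ^ 2 + ‖β x‖ ^ 2 = 1)
    (l : ℝ)
    (Ψ : ℤ → Fin 2 → ℂ) :
    Uact (fun x => coinM (α x) (β x) (Δ x)) Ψ = Complex.exp (Complex.I * l) • Ψ ↔
      ∀ x : ℤ, Jact Ψ (x + 1) = (transferM (α x) (β x) (Δ x) l).mulVec (Jact Ψ x) := by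
  rw [Uact_eq_smul_iff]
  refine forall_congr' fun x => ?_
  rw [coinM_mulVec_eq_smul_iff (hα x) (hαβ x)]
  simp [Jact]
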